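/- Consider a QoS satisfaction game with T_n^c ≥ 1 for all players n and channels c. For any social optimum x* and any pure Nash equilibrium y*, the ratio of social welfares satisfies ∑_n U_n(x*) / ∑_n U_n(y*) ≤ min{ N , (max_{n,c} T_n^c)/(min_{n,c} T_n^c) }. -/
import Mathlib


open Finset

/-- Congestion level of channel `c`: number of players choosing `c`. -/
def cong {N C : ℕ} (x : Fin N → Option (Fin C)) (c : Fin C) : ℕ :=
  (Finset.univ.filter fun n => x n = some c).card

/-- Utility of player `n`: 1 if satisfied, 0 if dormant, -1 if suffering. -/
def util {N C : ℕ} (T : Fin N → Fin C → ℤ) (x : Fin N → Option (Fin C)) (n : Fin N) : ℤ :=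
  match x n with
  | none => 0
  | some c => if (cong x c : ℤ) ≤ T n c then 1 else -1

/-- Pure Nash equilibrium: no unilateral deviation strictly improves utility. -/
def IsNash {N C : ℕ} (T : Fin N → Fin C → ℤ) (x : Fin N → Option (Fin C)) : Prop :=
  ∀ (n : Fin N) (s : Option (Fin C)), util T (Function.update x n s) n ≤ util T x n

/-- Number of satisfied players. -/
def B {N C : ℕ} (T : Fin N → Fin C → ℤ) (x : Fin N → Option (Fin C)) : ℕ :=
  (Finset.univ.filter fun n => util T x n = 1).card

section aux
variable {N C : ℕ} (T : Fin N → Fin C → ℤ)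

lemma util_le_one (x : Fin N → Option (Fin C)) (n : Fin N) : util T x n ≤ 1 := by
  cases h : x n with
  | none => simp [util, h]
  | some c => simp only [util, h]; split <;> norm_num

lemma util_cases (x : Fin N → Option (Fin C)) (n : Fin N) :
    (x n = none ∧ util T x n = 0) ∨ util T x n = 1 ∨ util T x n = -1 := by
  cases h : x n with
  | none => left; exact ⟨h ▸ rfl, by simp [util, h]⟩
  | some c => right; simp only [util, h]; split <;> simp

lemma nash_nonneg (y : Fin N → Option (Fin C)) (hnash : IsNash T y) (n : Fin N) :
    0 ≤ util T y n := by
  have h := hnash n none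
  have h0 : util T (Function.update y n none) n = 0 := by
    simp [util, Function.update_self]
  omega

lemma cong_update_of_none (y : Fin N → Option (Fin C)) (n : Fin N) (c : Fin C)
    (h : y n = none) :
    cong (Function.update y n (some c)) c = cong y c + 1 := by
  unfold cong
  have hset : univ.filter (fun m => Function.update y n (some c) m = some c)
      = insert n (univ.filter fun m => y m = some c) := by
    ext m
    simp only [mem_filter, mem_univ, true_and, mem_insert, Function.update_apply]
    by_cases hm : m = n <;> simp [hm, h]
  rw [hset, Finset.card_insert_of_notMem (by simp [h])]

lemma sum_cong (y : Fin N → Option (Fin C)) :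
    ∑ c : Fin C, (cong y c : ℤ) = ((univ.filter fun n => y n ≠ none).card : ℤ) := by
  have h : ∀ c : Fin C, (cong y c : ℤ) = ∑ n : Fin N, if y n = some c then 1 else 0 := by
    intro c
    rw [cong, Finset.card_filter]
    push_cast
    rfl
  rw [Finset.card_filter]
  push_cast
  simp only [h]
  rw [Finset.sum_comm]
  refine Finset.sum_congr rfl fun n _ => ?_
  cases hy : y n with
  | none => simp
  | some c0 => simp [Finset.sum_ite_eq']

lemma util_of_none (x : Fin N → Option (Fin C)) (n : Fin N) (h : x n = none) :
    util T x n = 0 := by simp [util, h]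

lemma util_of_some (x : Fin N → Option (Fin C)) (n : Fin N) (c : Fin C)
    (h : x n = some c) (hle : (cong x c : ℤ) ≤ T n c) : util T x n = 1 := by
  simp [util, h, hle]

lemma util_one_cong (x : Fin N → Option (Fin C)) (n : Fin N) (c : Fin C)
    (h : x n = some c) (hu : util T x n = 1) : (cong x c : ℤ) ≤ T n c := by
  simp only [util, h] at hu
  split at hu
  · assumption
  · omega

-- welfare of x as sum over channels of per-channel satisfied counts
lemma welfare_le_card_satisfied (x : Fin N → Option (Fin C)) :
    ∑ n : Fin N, util T x n
      ≤ ∑ c : Fin C, ((univ.filter fun n => x n = some c ∧ util T x n = 1).card : ℤ) := by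
  have step1 : ∑ n : Fin N, util T x n
      ≤ ∑ n : Fin N, (if util T x n = 1 then (1:ℤ) else 0) := by
    refine Finset.sum_le_sum fun n _ => ?_
    rcases util_cases T x n with ⟨_, h⟩ | h | h <;> simp [h]
  have step2 : ∑ c : Fin C, ((univ.filter fun n => x n = some c ∧ util T x n = 1).card : ℤ)
      = ∑ n : Fin N, (if util T x n = 1 then (1:ℤ) else 0) := by
    have h : ∀ c : Fin C,
        ((univ.filter fun n => x n = some c ∧ util T x n = 1).card : ℤ)
        = ∑ n : Fin N, if x n = some c ∧ util T x n = 1 then 1 else 0 := by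
      intro c; rw [Finset.card_filter]; push_cast; rfl
    simp only [h]
    rw [Finset.sum_comm]
    refine Finset.sum_congr rfl fun n _ => ?_
    cases hx : x n with
    | none => simp [util_of_none T x n hx]
    | some c0 =>
      by_cases hu : util T x n = 1 <;>
        simp [hx, hu, Finset.sum_ite_eq, Finset.sum_ite_eq']

  linarith [step1, step2]



lemma satisfied_card_le (x : Fin N → Option (Fin C)) (M : ℤ)
    (hM : ∀ n c, T n c ≤ M) (hM0 : 0 ≤ M) (c : Fin C) :
    ((univ.filter fun n => x n = some c ∧ util T x n = 1).card : ℤ) ≤ M := by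
  rcases (univ.filter fun n => x n = some c ∧ util T x n = 1).eq_empty_or_nonempty with he | ⟨n, hn⟩
  · simp [he, hM0]
  · simp only [mem_filter, mem_univ, true_and] at hn
    have hsub : (univ.filter fun n => x n = some c ∧ util T x n = 1)
        ⊆ univ.filter fun n => x n = some c := by
      intro k hk
      simp only [mem_filter, mem_univ, true_and] at hk ⊢
      exact hk.1
    have hcard : ((univ.filter fun n => x n = some c ∧ util T x n = 1).card : ℤ)
        ≤ (cong x c : ℤ) := by
      exact_mod_cast Finset.card_le_card hsub
    have h1 := util_one_cong T x n c hn.1 hn.2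
    have h2 := hM n c
    linarith

lemma nash_welfare_eq (y : Fin N → Option (Fin C)) (hnash : IsNash T y) :
    ∑ n : Fin N, util T y n = ∑ c : Fin C, (cong y c : ℤ) := by
  rw [sum_cong]
  rw [Finset.card_filter]
  push_cast
  refine Finset.sum_congr rfl fun n _ => ?_
  cases hy : y n with
  | none => simp [util_of_none T y n hy, hy]
  | some c =>
    have h0 := nash_nonneg T y hnash n
    rcases util_cases T y n with ⟨hn, _⟩ | h | h
    · rw [hy] at hn; cases hn
    · simp [h, hy]
    · omega

lemma cong_lower (y : Fin N → Option (Fin C)) (hnash : IsNash T y) (n0 : Fin N)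
    (h0 : y n0 = none) (m : ℤ) (hm : ∀ c, m ≤ T n0 c) (c : Fin C) :
    m ≤ (cong y c : ℤ) := by
  by_contra hlt
  push_neg at hlt
  have hdev : util T (Function.update y n0 (some c)) n0 = 1 := by
    refine util_of_some T _ n0 c (Function.update_self _ _ _) ?_
    rw [cong_update_of_none y n0 c h0]
    push_cast
    have := hm c
    omega
  have := hnash n0 (some c)
  rw [hdev, util_of_none T y n0 h0] at this
  omega

lemma nash_welfare_pos (hN : 0 < N) (hC : 0 < C) (hT : ∀ n c, 1 ≤ T n c)
    (y : Fin N → Option (Fin C)) (hnash : IsNash T y) :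
    1 ≤ ∑ n : Fin N, util T y n := by
  by_cases hall : ∃ n, util T y n = 1
  · obtain ⟨n, hn⟩ := hall
    have h2 : util T y n ≤ ∑ n : Fin N, util T y n :=
      Finset.single_le_sum (fun i _ => nash_nonneg T y hnash i) (Finset.mem_univ n)
    omega
  · exfalso
    push_neg at hall
    have hnone : ∀ n, y n = none := by
      intro n
      have h0 := nash_nonneg T y hnash n
      rcases util_cases T y n with ⟨hn, _⟩ | h | h
      · exact hn
      · exact absurd h (hall n)
      · omega
    set n0 : Fin N := ⟨0, hN⟩
    set c0 : Fin C := ⟨0, hC⟩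
    have hc : cong y c0 = 0 := by
      simp [cong, Finset.filter_eq_empty_iff, hnone]
    have hdev : util T (Function.update y n0 (some c0)) n0 = 1 := by
      refine util_of_some T _ n0 c0 (Function.update_self _ _ _) ?_
      rw [cong_update_of_none y n0 c0 (hnone n0), hc]
      have := hT n0 c0
      push_cast
      omega
    have := hnash n0 (some c0)
    rw [hdev, util_of_none T y n0 (hnone n0)] at this
    omega

end aux

/-- Price of anarchy bound: with all thresholds at least 1, for any social optimum `x`
and any pure Nash equilibrium `y`, the ratio of social welfares is at most
`min { N , (max_{n,c} T_n^c) / (min_{n,c} T_n^c) }`. -/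
theorem poa_bound {N C : ℕ} (hN : 0 < N) (hC : 0 < C)
    (T : Fin N → Fin C → ℤ) (hT : ∀ n c, 1 ≤ T n c)
    (x y : Fin N → Option (Fin C))
    (hopt : ∀ z : Fin N → Option (Fin C), ∑ n : Fin N, util T z n ≤ ∑ n : Fin N, util T x n)
    (hnash : IsNash T y) :
    ((∑ n : Fin N, util T x n : ℤ) : ℝ) / ((∑ n : Fin N, util T y n : ℤ) : ℝ) ≤
      min (N : ℝ)
        ((((Finset.univ ×ˢ Finset.univ).sup'
            ⟨(⟨0, hN⟩, ⟨0, hC⟩), Finset.mem_univ _⟩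
            (fun p : Fin N × Fin C => T p.1 p.2) : ℤ) : ℝ) /
         (((Finset.univ ×ˢ Finset.univ).inf'
            ⟨(⟨0, hN⟩, ⟨0, hC⟩), Finset.mem_univ _⟩
            (fun p : Fin N × Fin C => T p.1 p.2) : ℤ) : ℝ)) := by
  set M : ℤ := (Finset.univ ×ˢ Finset.univ).sup'
      ⟨(⟨0, hN⟩, ⟨0, hC⟩), Finset.mem_univ _⟩
      (fun p : Fin N × Fin C => T p.1 p.2) with hMdef
  set m : ℤ := (Finset.univ ×ˢ Finset.univ).inf'
      ⟨(⟨0, hN⟩, ⟨0, hC⟩), Finset.mem_univ _⟩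
      (fun p : Fin N × Fin C => T p.1 p.2) with hmdef
  have hMle : ∀ n c, T n c ≤ M := fun n c =>
    Finset.le_sup' (fun p : Fin N × Fin C => T p.1 p.2)
      (show (n, c) ∈ Finset.univ ×ˢ Finset.univ from
        Finset.mem_product.mpr ⟨Finset.mem_univ n, Finset.mem_univ c⟩)
  have hmle : ∀ n c, m ≤ T n c := fun n c =>
    Finset.inf'_le (fun p : Fin N × Fin C => T p.1 p.2)
      (show (n, c) ∈ Finset.univ ×ˢ Finset.univ from
        Finset.mem_product.mpr ⟨Finset.mem_univ n, Finset.mem_univ c⟩)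
  have h1m : (1:ℤ) ≤ m := Finset.le_inf' _ _ (fun p _ => hT p.1 p.2)
  have hmM : m ≤ M := le_trans (hmle ⟨0, hN⟩ ⟨0, hC⟩) (hMle _ _)
  have ha0 : 0 ≤ ∑ n : Fin N, util T x n := by
    have h := hopt (fun _ => none)
    have hz : ∑ n : Fin N, util T (fun _ => none) n = 0 :=
      Finset.sum_eq_zero fun n _ => util_of_none T _ n rfl
    linarith
  have hb1 : 1 ≤ ∑ n : Fin N, util T y n := nash_welfare_pos T hN hC hT y hnash
  have haN : ∑ n : Fin N, util T x n ≤ (N:ℤ) := by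
    calc ∑ n : Fin N, util T x n ≤ ∑ _n : Fin N, (1:ℤ) :=
          Finset.sum_le_sum fun n _ => util_le_one T x n
      _ = N := by simp
  have key : (∑ n : Fin N, util T x n) * m ≤ (∑ n : Fin N, util T y n) * M := by
    by_cases hall : ∀ n, util T y n = 1
    · have hbN : ∑ n : Fin N, util T y n = (N:ℤ) := by simp [hall]
      have hab : ∑ n : Fin N, util T x n ≤ ∑ n : Fin N, util T y n := by
        rw [hbN]; exact haN
      nlinarith [ha0, h1m, hmM, hab]
    · push_neg at hall
      obtain ⟨n0, hn0⟩ := hall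
      have hynone : y n0 = none := by
        have h0 := nash_nonneg T y hnash n0
        rcases util_cases T y n0 with ⟨hn, _⟩ | h | h
        · exact hn
        · exact absurd h hn0
        · omega
      have hbC : (C:ℤ) * m ≤ ∑ n : Fin N, util T y n := by
        rw [nash_welfare_eq T y hnash]
        calc (C:ℤ) * m = ∑ _c : Fin C, m := by simp [mul_comm]
          _ ≤ ∑ c : Fin C, (cong y c : ℤ) :=
              Finset.sum_le_sum fun c _ =>
                cong_lower T y hnash n0 hynone m (fun c' => hmle n0 c') c
      have haC : ∑ n : Fin N, util T x n ≤ (C:ℤ) * M := by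
        calc ∑ n : Fin N, util T x n
            ≤ ∑ c : Fin C, ((univ.filter fun n => x n = some c ∧ util T x n = 1).card : ℤ) :=
              welfare_le_card_satisfied T x
          _ ≤ ∑ _c : Fin C, M :=
              Finset.sum_le_sum fun c _ => satisfied_card_le T x M hMle (by linarith) c
          _ = C * M := by simp [mul_comm]
      calc (∑ n : Fin N, util T x n) * m
          ≤ ((C:ℤ) * M) * m := mul_le_mul_of_nonneg_right haC (by linarith)
        _ = ((C:ℤ) * m) * M := by ring
        _ ≤ (∑ n : Fin N, util T y n) * M := mul_le_mul_of_nonneg_right hbC (by linarith)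
  have hbR : (0:ℝ) < ((∑ n : Fin N, util T y n : ℤ) : ℝ) := by exact_mod_cast hb1
  have hmR : (0:ℝ) < ((m : ℤ) : ℝ) := by exact_mod_cast h1m
  refine le_min ?_ ?_
  · rw [div_le_iff₀ hbR]
    have h : (∑ n : Fin N, util T x n) ≤ (N:ℤ) * ∑ n : Fin N, util T y n := by
      nlinarith [haN, hb1, Int.ofNat_nonneg N]
    exact_mod_cast h
  · rw [div_le_div_iff₀ hbR hmR]
    have h : (∑ n : Fin N, util T x n) * m ≤ M * ∑ n : Fin N, util T y n := by
      linarith [key]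
    exact_mod_cast h
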